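/- Let u, v ∈ ℝ^n with v = s·u for some s > 0, ‖u‖₂ = r > 0, w > 0, γ > 0, and a, b, c as in the rank-two perturbation setting (a = γ(w/r³)uᵀv + w/r, b = −(3γw/r⁵ uᵀv + w/r³), c = γw/r³). Then Δ = 4c²r²‖v‖₂² + b²r⁴ + 4bc r² uᵀv equals a², and consequently the smallest extreme eigenvalue λ₃ = ½(2a + br² + 2c uᵀv) − ½√Δ equals 0, so the matrix aI + buuᵀ + c(uvᵀ+vuᵀ) is positive semidefinite. -/

import Mathlib

open Matrix BigOperators

/-- Euclidean norm of a vector in `ℝ^n`. -/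
noncomputable def enorm {n : ℕ} (v : Fin n → ℝ) : ℝ := Real.sqrt (∑ i, v i ^ 2)

/-- Euclidean dot product. -/
def dot {n : ℕ} (u v : Fin n → ℝ) : ℝ := ∑ i, u i * v i

/-- Discriminant of the rank-two perturbation with `‖u‖ = r`. -/
noncomputable def Delta {n : ℕ} (b c r : ℝ) (u v : Fin n → ℝ) : ℝ :=
  4 * c ^ 2 * r ^ 2 * (_root_.enorm v) ^ 2 + b ^ 2 * r ^ 4 + 4 * b * c * r ^ 2 * dot u v

/-- Extreme eigenvalue `λ₃`. -/
noncomputable def lam3 {n : ℕ} (a b c r : ℝ) (u v : Fin n → ℝ) : ℝ :=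
  (2 * a + b * r ^ 2 + 2 * c * dot u v) / 2 - Real.sqrt (Delta b c r u v) / 2

/-!
For `v = s • u` the perturbation `b uuᵀ + c (uvᵀ + vuᵀ)` collapses to the rank-one matrix
`(b + 2cs) uuᵀ`, and `Δ` to the perfect square `(r² (b + 2cs))²`. With the given `a, b, c` one
has `r² (b + 2cs) = -a` and `a = w (1 + γ s) / r > 0`, so `Δ = a²` and `λ₃ = (a - |a|) / 2 = 0`.
The matrix is then `a (I - uuᵀ / r²)`, a nonnegative multiple of an orthogonal projection.
-/

lemma dot_self_eq_enorm_sq {n : ℕ} (u : Fin n → ℝ) : dot u u = _root_.enorm u ^ 2 := by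
  rw [_root_.enorm, Real.sq_sqrt (Finset.sum_nonneg fun i _ => sq_nonneg _)]
  simp only [dot, sq]

lemma dot_smul_right {n : ℕ} (s : ℝ) (u v : Fin n → ℝ) : dot u (s • v) = s * dot u v := by
  simp only [dot, Pi.smul_apply, smul_eq_mul, Finset.mul_sum]
  exact Finset.sum_congr rfl fun i _ => by ring

lemma enorm_smul_sq {n : ℕ} (s : ℝ) (u : Fin n → ℝ) :
    _root_.enorm (s • u) ^ 2 = s ^ 2 * _root_.enorm u ^ 2 := by
  rw [← dot_self_eq_enorm_sq, ← dot_self_eq_enorm_sq]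
  simp only [dot, Pi.smul_apply, smul_eq_mul, Finset.mul_sum]
  exact Finset.sum_congr rfl fun i _ => by ring

lemma Delta_smul_self {n : ℕ} {b c r s : ℝ} {u : Fin n → ℝ} (hu : _root_.enorm u = r) :
    Delta b c r u (s • u) = (r ^ 2 * (b + 2 * c * s)) ^ 2 := by
  rw [Delta, enorm_smul_sq, dot_smul_right, dot_self_eq_enorm_sq, hu]
  ring

lemma lam3_smul_self {n : ℕ} {a b c r s : ℝ} {u : Fin n → ℝ} (hu : _root_.enorm u = r) :
    lam3 a b c r u (s • u) = (2 * a + r ^ 2 * (b + 2 * c * s) - |r ^ 2 * (b + 2 * c * s)|) / 2 := by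
  rw [lam3, Delta_smul_self hu, Real.sqrt_sq_eq_abs, dot_smul_right, dot_self_eq_enorm_sq, hu]
  ring

lemma smul_vecMulVec_add_smul_vecMulVec_smul_self {ι : Type*} (b c s : ℝ) (u : ι → ℝ) :
    b • vecMulVec u u + c • (vecMulVec u (s • u) + vecMulVec (s • u) u) =
      (b + 2 * c * s) • vecMulVec u u := by
  rw [vecMulVec_smul, smul_vecMulVec]
  module

lemma posSemidef_smul_one_add_smul_vecMulVec {ι : Type*} [Fintype ι] [DecidableEq ι]
    {α β : ℝ} (u : ι → ℝ) (hα : 0 ≤ α) (h : 0 ≤ α + β * (u ⬝ᵥ u)) :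
    (α • (1 : Matrix ι ι ℝ) + β • vecMulVec u u).PosSemidef := by
  have huu : (vecMulVec u u).IsHermitian := by
    simpa using (posSemidef_vecMulVec_self_star u).isHermitian
  refine .of_dotProduct_mulVec_nonneg
    ((isHermitian_one.smul (.all α)).add (huu.smul (.all β))) fun x => ?_
  have hquad : star x ⬝ᵥ ((α • 1 + β • vecMulVec u u) *ᵥ x) =
      α * (x ⬝ᵥ x) + β * (u ⬝ᵥ x) ^ 2 := by
    simp only [star_trivial, add_mulVec, smul_mulVec, one_mulVec, vecMulVec_mulVec,
      dotProduct_add, dotProduct_smul, smul_eq_mul, op_smul_eq_mul, dotProduct_comm x u]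
    ring
  have hCS : (u ⬝ᵥ x) ^ 2 ≤ (u ⬝ᵥ u) * (x ⬝ᵥ x) := by
    simpa only [dotProduct, sq] using Finset.sum_mul_sq_le_sq_mul_sq Finset.univ u x
  have hx : 0 ≤ x ⬝ᵥ x := by simpa using dotProduct_self_star_nonneg x
  rw [hquad]
  rcases le_total 0 β with hβ | hβ
  · positivity
  · nlinarith [mul_le_mul_of_nonpos_left hCS hβ]

/-- Collinear case `v = s·u`, `s > 0`: the discriminant `Δ` equals `a²`, the smallest extreme
eigenvalue `λ₃` is `0`, and the matrix `aI + buuᵀ + c(uvᵀ + vuᵀ)` is positive semidefinite. -/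
theorem stmt9 {n : ℕ} (r w γ s : ℝ) (hr : 0 < r) (hw : 0 < w) (hγ : 0 < γ) (hs : 0 < s)
    (u v : Fin n → ℝ) (hu : _root_.enorm u = r) (hv : v = s • u)
    (a b c : ℝ)
    (hA : a = γ * (w / r ^ 3) * dot u v + w / r)
    (hB : b = -(3 * γ * w / r ^ 5 * dot u v + w / r ^ 3))
    (hC : c = γ * w / r ^ 3) :
    Delta b c r u v = a ^ 2 ∧
    lam3 a b c r u v = 0 ∧
    (a • (1 : Matrix (Fin n) (Fin n) ℝ) + b • Matrix.vecMulVec u u +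
      c • (Matrix.vecMulVec u v + Matrix.vecMulVec v u)).PosSemidef := by
  subst hv
  have hdot : dot u (s • u) = s * r ^ 2 := by rw [dot_smul_right, dot_self_eq_enorm_sq, hu]
  have ha : a = w * (1 + γ * s) / r := by rw [hA, hdot]; field_simp; ring
  have ha_nonneg : 0 ≤ a := by rw [ha]; positivity
  have hkey : r ^ 2 * (b + 2 * c * s) = -a := by rw [hB, hC, hdot, ha]; field_simp; ring
  refine ⟨by rw [Delta_smul_self hu, hkey, neg_sq], ?_, ?_⟩
  · rw [lam3_smul_self hu, hkey, abs_neg, abs_of_nonneg ha_nonneg]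
    ring
  · rw [add_assoc, smul_vecMulVec_add_smul_vecMulVec_smul_self]
    refine posSemidef_smul_one_add_smul_vecMulVec u ha_nonneg ?_
    have huu : u ⬝ᵥ u = r ^ 2 := by rw [← hu, ← dot_self_eq_enorm_sq]; rfl
    rw [huu, mul_comm, hkey, add_neg_cancel]
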